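/- For every i ∈ I, the operator identity σ_i∘σ_i + (S_{ħ d_i} − id)∘σ_i = S_{ħ d_i} holds on V; equivalently, (σ_i + S_{ħ d_i})∘(σ_i − id) = 0. Consequently, the operators 𝖳_i := S_{−ħ d_i/2}∘σ_i satisfy the Hecke quadratic relation (𝖳_i − S_{−ħ d_i/2})∘(𝖳_i + S_{ħ d_i/2}) = 0 in End(V). -/
import Mathlib


noncomputable section
/-- The value `m_{ij}` of the Coxeter matrix attached to `t = a_{ij}·a_{ji}`:
`2, 3, 4, 6` according as `t = 0, 1, 2, 3`. -/
def coxEntry (t : ℤ) : ℕ :=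
  if t = 0 then 2 else if t = 1 then 3 else if t = 2 then 4 else 6

/-- A generalized Cartan matrix `(a_{ij})` of finite type, with symmetrizing positive
integers `(d_i)`, together with its Coxeter matrix `(m_{ij})` whose associated Coxeter
group is required to be finite. -/
structure FiniteCartan (I : Type) where
  a : I → I → ℤ
  d : I → ℤ
  cm : CoxeterMatrix I
  a_diag : ∀ i, a i i = 2
  a_offdiag_nonpos : ∀ i j, i ≠ j → a i j ≤ 0
  d_pos : ∀ i, 0 < d i
  d_symmetrizes : ∀ i j, d i * a i j = d j * a j i
  a_bound : ∀ i j, i ≠ j → a i j * a j i ≤ 3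
  cm_offdiag : ∀ i j, i ≠ j → cm i j = coxEntry (a i j * a j i)
  finiteWeyl : Finite cm.Group

/-- `ε_{ij} = (-1)^{δ_{ij}}`. -/
def eps {I : Type} [DecidableEq I] (i j : I) : ℤ := if i = j then -1 else 1

/-- The alternating composition `f ∘ g ∘ f ∘ ⋯` with `n` factors. -/
def braidWord {α : Type*} (f g : α → α) : ℕ → (α → α)
  | 0 => id
  | n + 1 => f ∘ braidWord g f n

/-- The shift operator `S_c` on `V = (I → ℂ[t])`: `(S_c f)_j(t) = f_j(t + c)`. -/
def shiftV {I : Type} (c : ℂ) (f : I → Polynomial ℂ) : I → Polynomial ℂ := fun j =>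
  (f j).comp (Polynomial.X + Polynomial.C c)

/-- The operator `σ_i` on `V = (I → ℂ[t])`: `(σ_i f)_ℓ = f_ℓ` for `ℓ ≠ i`, and
`(σ_i f)_i = f_i + Σ_{j∈I} ε_{ij} Σ_{k=0}^{|a_{ij}|−1} (S_{(ħ d_i/2)(|a_{ij}|−2k)} f)_j`. -/
def sigmaV {I : Type} [Fintype I] [DecidableEq I] (a : I → I → ℤ) (d : I → ℤ)
    (hbar : ℂ) (i : I) (f : I → Polynomial ℂ) : I → Polynomial ℂ := fun l =>
  if l = i then
    f i + ∑ j : I, (eps i j : ℂ) •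
      ∑ k ∈ Finset.range (a i j).natAbs,
        shiftV ((hbar * (d i : ℂ) / 2) * (((a i j).natAbs : ℂ) - 2 * (k : ℂ))) f j
  else f l

namespace AuxHecke

variable {I : Type} [Fintype I] [DecidableEq I]

lemma shiftV_comp (c c' : ℂ) (f : I → Polynomial ℂ) :
    shiftV c (shiftV c' f) = shiftV (c + c') f := by
  funext j
  unfold shiftV
  rw [Polynomial.comp_assoc]
  congr 1
  simp [Polynomial.add_comp, Polynomial.C_add, add_assoc]

lemma shiftV_zero (f : I → Polynomial ℂ) : shiftV 0 f = f := by
  funext j; simp [shiftV]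

lemma shiftV_add (c : ℂ) (f g : I → Polynomial ℂ) :
    shiftV c (f + g) = shiftV c f + shiftV c g := by
  funext j; simp [shiftV, Polynomial.add_comp]

lemma shiftV_sub (c : ℂ) (f g : I → Polynomial ℂ) :
    shiftV c (f - g) = shiftV c f - shiftV c g := by
  funext j; simp [shiftV, Polynomial.sub_comp]

lemma sigmaV_add (a : I → I → ℤ) (d : I → ℤ) (hbar : ℂ) (i : I) (f g : I → Polynomial ℂ) :
    sigmaV a d hbar i (f + g) = sigmaV a d hbar i f + sigmaV a d hbar i g := by
  funext l
  by_cases h : l = i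
  · subst h
    simp [sigmaV, shiftV_add, Finset.sum_add_distrib, smul_add]
    ring
  · simp [sigmaV, h]

lemma sigmaV_sub (a : I → I → ℤ) (d : I → ℤ) (hbar : ℂ) (i : I) (f g : I → Polynomial ℂ) :
    sigmaV a d hbar i (f - g) = sigmaV a d hbar i f - sigmaV a d hbar i g := by
  funext l
  by_cases h : l = i
  · subst h
    simp [sigmaV, shiftV_sub, smul_sub, Finset.sum_sub_distrib]
    ring
  · simp [sigmaV, h]

lemma sigmaV_shift (a : I → I → ℤ) (d : I → ℤ) (hbar : ℂ) (i : I) (c : ℂ)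
    (f : I → Polynomial ℂ) :
    sigmaV a d hbar i (shiftV c f) = shiftV c (sigmaV a d hbar i f) := by
  funext l
  by_cases h : l = i
  · subst h
    simp only [sigmaV, shiftV, eq_self_iff_true, if_true, Polynomial.add_comp,
      Polynomial.sum_comp, Polynomial.smul_comp]
    have : ∀ (p : Polynomial ℂ) (u v : ℂ),
        (p.comp (Polynomial.X + Polynomial.C u)).comp (Polynomial.X + Polynomial.C v)
          = (p.comp (Polynomial.X + Polynomial.C v)).comp (Polynomial.X + Polynomial.C u) := by
      intro p u v
      rw [Polynomial.comp_assoc, Polynomial.comp_assoc]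
      congr 1
      simp only [Polynomial.add_comp, Polynomial.X_comp, Polynomial.C_comp]
      ring
    congr 1
    apply Finset.sum_congr rfl
    intro j _
    congr 1
    apply Finset.sum_congr rfl
    intro k _
    apply this
  · simp only [sigmaV, shiftV, if_neg h]


lemma sigma_at_i (a : I → I → ℤ) (d : I → ℤ) (hbar : ℂ) (i : I) (ha : a i i = 2)
    (h : I → Polynomial ℂ) :
    sigmaV a d hbar i h i =
      (∑ j ∈ Finset.univ.erase i, (eps i j : ℂ) •
        ∑ k ∈ Finset.range (a i j).natAbs,
          shiftV (hbar * (d i : ℂ) / 2 * (((a i j).natAbs : ℂ) - 2 * (k : ℂ))) h j)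
      - shiftV (hbar * (d i : ℂ)) h i := by
  simp only [sigmaV, eq_self_iff_true, if_true]
  rw [← Finset.add_sum_erase Finset.univ _ (Finset.mem_univ i)]
  have e0 : hbar * (d i : ℂ) / 2 * ((((a i i).natAbs : ℕ) : ℂ) - 2 * ((0:ℕ) : ℂ))
      = hbar * (d i : ℂ) := by rw [ha]; norm_num
  have e1 : hbar * (d i : ℂ) / 2 * ((((a i i).natAbs : ℕ) : ℂ) - 2 * ((1:ℕ) : ℂ))
      = 0 := by rw [ha]; norm_num
  have h2 : (a i i).natAbs = 2 := by rw [ha]; rfl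
  rw [h2]
  rw [Finset.sum_range_succ, Finset.sum_range_one]
  rw [← h2, e0, e1, congrFun (shiftV_zero h) i]
  simp only [eps, eq_self_iff_true, if_true, Int.cast_neg, Int.cast_one, neg_smul, one_smul]
  abel

lemma sigma_erase_invariant (a : I → I → ℤ) (d : I → ℤ) (hbar : ℂ) (i : I)
    (f : I → Polynomial ℂ) :
    (∑ j ∈ Finset.univ.erase i, (eps i j : ℂ) •
        ∑ k ∈ Finset.range (a i j).natAbs,
          shiftV (hbar * (d i : ℂ) / 2 * (((a i j).natAbs : ℂ) - 2 * (k : ℂ)))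
            (sigmaV a d hbar i f) j)
    = ∑ j ∈ Finset.univ.erase i, (eps i j : ℂ) •
        ∑ k ∈ Finset.range (a i j).natAbs,
          shiftV (hbar * (d i : ℂ) / 2 * (((a i j).natAbs : ℂ) - 2 * (k : ℂ))) f j := by
  apply Finset.sum_congr rfl
  intro j hj
  have hji : j ≠ i := (Finset.mem_erase.mp hj).1
  congr 1
  apply Finset.sum_congr rfl
  intro k _
  simp only [shiftV, sigmaV, if_neg hji]

lemma key1 (a : I → I → ℤ) (d : I → ℤ) (hbar : ℂ) (i : I) (ha : a i i = 2)
    (f : I → Polynomial ℂ) :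
    sigmaV a d hbar i (sigmaV a d hbar i f) +
      (shiftV (hbar * (d i : ℂ)) (sigmaV a d hbar i f) - sigmaV a d hbar i f) =
    shiftV (hbar * (d i : ℂ)) f := by
  funext l
  simp only [Pi.add_apply, Pi.sub_apply]
  by_cases h : l = i
  · subst h
    rw [sigma_at_i a d hbar l ha, sigma_at_i a d hbar l ha f,
      sigma_erase_invariant a d hbar l f]
    ring
  · simp only [sigmaV, shiftV, if_neg h]
    ring


lemma key2 (a : I → I → ℤ) (d : I → ℤ) (hbar : ℂ) (i : I) (ha : a i i = 2)
    (f : I → Polynomial ℂ) :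
    sigmaV a d hbar i (sigmaV a d hbar i f - f) +
      shiftV (hbar * (d i : ℂ)) (sigmaV a d hbar i f - f) = 0 := by
  rw [sigmaV_sub, shiftV_sub]
  linear_combination key1 a d hbar i ha f

lemma key3 (a : I → I → ℤ) (d : I → ℤ) (hbar : ℂ) (i : I) (ha : a i i = 2)
    (f : I → Polynomial ℂ) :
    (shiftV (-(hbar * (d i : ℂ)) / 2) ∘ sigmaV a d hbar i)
        ((shiftV (-(hbar * (d i : ℂ)) / 2) ∘ sigmaV a d hbar i) f +
          shiftV (hbar * (d i : ℂ) / 2) f) -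
      shiftV (-(hbar * (d i : ℂ)) / 2)
        ((shiftV (-(hbar * (d i : ℂ)) / 2) ∘ sigmaV a d hbar i) f +
          shiftV (hbar * (d i : ℂ) / 2) f) = 0 := by
  have h1 := key1 a d hbar i ha f
  simp only [Function.comp_apply]
  rw [sigmaV_add, sigmaV_shift, sigmaV_shift]
  simp only [shiftV_add, shiftV_comp]
  rw [show -(hbar * (d i : ℂ))/2 + -(hbar * (d i : ℂ))/2 = -(hbar * (d i : ℂ)) from by ring]
  rw [show -(hbar * (d i : ℂ))/2 + hbar * (d i : ℂ)/2 = 0 from by ring, shiftV_zero, shiftV_zero]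
  have h1' := congrArg (shiftV (-(hbar * (d i : ℂ)))) h1
  simp only [shiftV_add, shiftV_sub, shiftV_comp] at h1'
  rw [show -(hbar * (d i : ℂ)) + hbar * (d i : ℂ) = 0 from by ring, shiftV_zero, shiftV_zero] at h1'
  linear_combination h1'

end AuxHecke


/-- the identity `σ_i∘σ_i + (S_{ħd_i} − id)∘σ_i = S_{ħd_i}` holds on `V`;
equivalently `(σ_i + S_{ħd_i})∘(σ_i − id) = 0`; consequently `𝖳_i := S_{−ħd_i/2}∘σ_i`
satisfies the Hecke quadratic relation `(𝖳_i − S_{−ħd_i/2})∘(𝖳_i + S_{ħd_i/2}) = 0`. -/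
theorem sigmaV_hecke_relation
    {I : Type} [Fintype I] [DecidableEq I] (𝒞 : FiniteCartan I) (hbar : ℂ)
    (hhbar : hbar ≠ 0) (i : I) :
    (∀ f : I → Polynomial ℂ,
      sigmaV 𝒞.a 𝒞.d hbar i (sigmaV 𝒞.a 𝒞.d hbar i f) +
        (shiftV (hbar * (𝒞.d i : ℂ)) (sigmaV 𝒞.a 𝒞.d hbar i f) -
          sigmaV 𝒞.a 𝒞.d hbar i f) =
      shiftV (hbar * (𝒞.d i : ℂ)) f) ∧
    (∀ f : I → Polynomial ℂ,
      sigmaV 𝒞.a 𝒞.d hbar i (sigmaV 𝒞.a 𝒞.d hbar i f - f) +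
        shiftV (hbar * (𝒞.d i : ℂ)) (sigmaV 𝒞.a 𝒞.d hbar i f - f) = 0) ∧
    (∀ f : I → Polynomial ℂ,
      (shiftV (-(hbar * (𝒞.d i : ℂ)) / 2) ∘ sigmaV 𝒞.a 𝒞.d hbar i)
          ((shiftV (-(hbar * (𝒞.d i : ℂ)) / 2) ∘ sigmaV 𝒞.a 𝒞.d hbar i) f +
            shiftV (hbar * (𝒞.d i : ℂ) / 2) f) -
        shiftV (-(hbar * (𝒞.d i : ℂ)) / 2)
          ((shiftV (-(hbar * (𝒞.d i : ℂ)) / 2) ∘ sigmaV 𝒞.a 𝒞.d hbar i) f +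
            shiftV (hbar * (𝒞.d i : ℂ) / 2) f) = 0) :=
  ⟨fun f => AuxHecke.key1 𝒞.a 𝒞.d hbar i (𝒞.a_diag i) f,
   fun f => AuxHecke.key2 𝒞.a 𝒞.d hbar i (𝒞.a_diag i) f,
   fun f => AuxHecke.key3 𝒞.a 𝒞.d hbar i (𝒞.a_diag i) f⟩
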